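/- For n ≥ 1 and ρ ∈ ℕ, let W(n,ρ) = Σ w(t), the sum of the Yule–Harding weights of all plane binary trees t with n leaves and c(t) = ρ. Then W(1,0) = 1, W(1,ρ) = 0 for ρ ≥ 1, and for all n ≥ 2 and ρ ≥ 1, W(n,ρ) = (1/(n−1)) · Σ_{d ∈ Div(ρ)} Σ_{j=1}^{n−1} W(j, d−1) · W(n−j, ρ/d − 1), where Div(ρ) is the set of positive divisors of ρ. -/

import Mathlib

/-- Plane binary trees: a leaf, or an ordered pair of plane binary trees. -/
inductive PTree : Type where
  | leaf : PTree
  | node : PTree → PTree → PTree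
deriving DecidableEq

namespace PTree

/-- Number of leaves of a plane binary tree. -/
def leaves : PTree → ℕ
  | leaf => 1
  | node l r => leaves l + leaves r

/-- Number of root ancestral configurations:
`c(leaf) = 0`, `c(node l r) = (c l + 1) * (c r + 1)`. -/
def c : PTree → ℕ
  | leaf => 0
  | node l r => (c l + 1) * (c r + 1)

/-- The finite set of plane binary trees with `n` leaves. -/
def trees : ℕ → Finset PTree
  | 0 => ∅
  | 1 => {leaf}
  | (n+2) =>
      (Finset.Icc 1 (n+1)).attach.biUnion fun j =>
        ((trees j.1) ×ˢ (trees (n+2-j.1))).image fun p => node p.1 p.2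
decreasing_by
  · have h := Finset.mem_Icc.mp j.2; omega
  · have h := Finset.mem_Icc.mp j.2; omega

end PTree

namespace PTree

/-- Yule–Harding weight: `w(leaf) = 1`,
`w(node l r) = w l * w r / (leaves l + leaves r - 1)`. -/
def w : PTree → ℚ
  | leaf => 1
  | node l r => w l * w r / ((leaves l + leaves r - 1 : ℕ) : ℚ)

end PTree

/-- `W n ρ`: the Yule–Harding probability that a plane binary tree with `n` leaves has
exactly `ρ` root configurations, i.e. the sum of the Yule–Harding weights of all plane
binary trees with `n` leaves and `c = ρ`. -/
def W (n ρ : ℕ) : ℚ :=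
  ∑ t ∈ (PTree.trees n).filter (fun t => PTree.c t = ρ), PTree.w t

/-! Splitting at the root, a tree with `n ≥ 2` leaves is `node l r` with `l`, `r` of sizes `j` and
`n - j`, weight `w l * w r / (n - 1)` and `c = (c l + 1) * (c r + 1)`. So `(n - 1) * W n ρ` sums
`w l * w r` over the pairs with `(c l + 1) * (c r + 1) = ρ`, and these pairs are sorted by the
divisor `d = c l + 1` of `ρ`, which turns the sum into the products
`W j (d - 1) * W (n - j) (ρ / d - 1)`. -/

namespace PTree

theorem leaves_of_mem_trees {n : ℕ} {t : PTree} (ht : t ∈ trees n) : t.leaves = n := by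
  induction n using trees.induct generalizing t with
  | case1 => simp [trees] at ht
  | case2 => simp_all [trees, leaves]
  | case3 m ihl ihr =>
    rw [trees] at ht
    simp only [Finset.mem_biUnion, Finset.mem_attach, Finset.mem_image,
      Finset.mem_product, true_and] at ht
    obtain ⟨j, ⟨l, r⟩, ⟨hl, hr⟩, rfl⟩ := ht
    have hj := Finset.mem_Icc.mp j.2
    simp only [leaves, ihl j hl, ihr j hr]
    omega

theorem sum_trees_add_two {M : Type*} [AddCommMonoid M] (m : ℕ) (f : PTree → M) :
    ∑ t ∈ trees (m + 2), f t =
      ∑ j ∈ Finset.Icc 1 (m + 1), ∑ l ∈ trees j, ∑ r ∈ trees (m + 2 - j),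
        f (node l r) := by
  have node_injective : Function.Injective fun p : PTree × PTree => node p.1 p.2 :=
    fun p q h => by cases p; cases q; cases h; rfl
  rw [trees, Finset.sum_biUnion]
  · rw [← Finset.sum_attach (Finset.Icc 1 (m + 1))]
    refine Finset.sum_congr rfl fun j _ => ?_
    rw [Finset.sum_image node_injective.injOn, Finset.sum_product]
  · intro i _ j _ hij
    refine Finset.disjoint_left.mpr ?_
    simp only [Finset.mem_image, Finset.mem_product]
    rintro _ ⟨⟨l, r⟩, ⟨hl, -⟩, rfl⟩ ⟨⟨l', r'⟩, ⟨hl', -⟩, h⟩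
    cases h
    exact hij (Subtype.ext ((leaves_of_mem_trees hl).symm.trans (leaves_of_mem_trees hl')))

theorem w_node_of_mem_trees {j k : ℕ} {l r : PTree} (hl : l ∈ trees j) (hr : r ∈ trees k) :
    w (node l r) = w l * w r / ((j + k - 1 : ℕ) : ℚ) := by
  rw [w, leaves_of_mem_trees hl, leaves_of_mem_trees hr]

end PTree

open PTree

theorem W_one (ρ : ℕ) : W 1 ρ = if ρ = 0 then 1 else 0 := by
  by_cases hρ : ρ = 0 <;> simp [W, trees, c, w, hρ, Finset.filter_singleton, eq_comm]

theorem W_add_two (m ρ : ℕ) :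
    W (m + 2) ρ = (1 / ((m : ℚ) + 1)) *
      ∑ j ∈ Finset.Icc 1 (m + 1), ∑ l ∈ trees j, ∑ r ∈ trees (m + 2 - j),
        if (c l + 1) * (c r + 1) = ρ then w l * w r else 0 := by
  rw [W, Finset.sum_filter, sum_trees_add_two, Finset.mul_sum]
  refine Finset.sum_congr rfl fun j hj => ?_
  have hj := Finset.mem_Icc.mp hj
  simp only [Finset.mul_sum]
  refine Finset.sum_congr rfl fun l hl => Finset.sum_congr rfl fun r hr => ?_
  rw [c, w_node_of_mem_trees hl hr, show j + (m + 2 - j) - 1 = m + 1 by omega]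
  split_ifs
  · push_cast
    ring
  · simp

theorem W_mul_W (j k a b : ℕ) :
    W j a * W k b = ∑ l ∈ trees j, ∑ r ∈ trees k,
      if c l = a ∧ c r = b then w l * w r else 0 := by
  simp only [W, Finset.sum_filter, Finset.sum_mul_sum, ite_zero_mul_ite_zero]

theorem Nat.sum_divisors_ite_pred_eq {M : Type*} [AddCommMonoid M] (ρ a b : ℕ) (x : M) :
    ∑ d ∈ ρ.divisors, (if a = d - 1 ∧ b = ρ / d - 1 then x else 0) =
      if (a + 1) * (b + 1) = ρ then x else 0 := by
  rw [← Nat.sum_divisorsAntidiagonal (fun d e => if a = d - 1 ∧ b = e - 1 then x else 0)]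
  have pred_eq_iff : ∀ p ∈ ρ.divisorsAntidiagonal,
      (a = p.1 - 1 ∧ b = p.2 - 1) ↔ p = (a + 1, b + 1) := by
    intro p hp
    obtain ⟨h, hρ⟩ := Nat.mem_divisorsAntidiagonal.mp hp
    have : p.1 ≠ 0 ∧ p.2 ≠ 0 := by constructor <;> rintro h0 <;> simp [h0] at h <;> omega
    rw [Prod.ext_iff]
    omega
  rw [Finset.sum_congr rfl fun p hp => if_congr (pred_eq_iff p hp) rfl rfl, Finset.sum_ite_eq']
  simp only [Nat.mem_divisorsAntidiagonal]
  by_cases h : (a + 1) * (b + 1) = ρ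
  · subst h
    simp
  · simp [h]

theorem sum_divisors_W_mul_W (ρ j k : ℕ) :
    ∑ d ∈ ρ.divisors, W j (d - 1) * W k (ρ / d - 1) =
      ∑ l ∈ trees j, ∑ r ∈ trees k,
        if (c l + 1) * (c r + 1) = ρ then w l * w r else 0 := by
  simp only [W_mul_W]
  rw [Finset.sum_comm]
  refine Finset.sum_congr rfl fun l _ => ?_
  rw [Finset.sum_comm]
  exact Finset.sum_congr rfl fun r _ => Nat.sum_divisors_ite_pred_eq ρ _ _ _

/-- `W 1 0 = 1`, `W 1 ρ = 0` for `ρ ≥ 1`, and for `n ≥ 2`, `ρ ≥ 1`,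
`W n ρ = (1/(n−1)) · Σ_{d ∣ ρ} Σ_{j=1}^{n−1} W j (d−1) · W (n−j) (ρ/d − 1)`. -/
theorem W_recurrence :
    W 1 0 = 1 ∧ (∀ ρ : ℕ, 1 ≤ ρ → W 1 ρ = 0) ∧
    ∀ n : ℕ, 2 ≤ n → ∀ ρ : ℕ, 1 ≤ ρ →
      W n ρ =
        (1 / ((n : ℚ) - 1)) *
          ∑ d ∈ ρ.divisors, ∑ j ∈ Finset.Icc 1 (n - 1),
            W j (d - 1) * W (n - j) (ρ / d - 1) := by
  refine ⟨by simp [W_one], fun ρ hρ => by simp [W_one]; omega, fun n hn ρ _ => ?_⟩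
  obtain ⟨m, rfl⟩ : ∃ m, n = m + 2 := ⟨n - 2, by omega⟩
  rw [W_add_two, Finset.sum_comm]
  simp only [sum_divisors_W_mul_W, show m + 2 - 1 = m + 1 from rfl]
  congr 1
  push_cast
  ring
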